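/- One has ℂ[z] = D(ℂ[z]) + ℂ[z]_{<N} and D(ℂ[z]) ∩ ℂ[z]_{<N} = D(ℂ[z]_{<M}); consequently the inclusion ℂ[z]_{<N} ⊆ ℂ[z] induces a bijective ℂ-linear map ℂ[z]_{<N} / D(ℂ[z]_{<M}) → ℂ[z] / D(ℂ[z]). -/

import Mathlib

open Complex Polynomial Finset

/-- The differential operator `D f = ∑_{j=0}^{μ} P_{μ-j} · f^{(j)}`. -/
noncomputable def Dop (μ : ℕ) (P : ℕ → Polynomial ℂ) (f : ℂ → ℂ) : ℂ → ℂ :=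
  fun z => ∑ j ∈ Finset.range (μ + 1), (P (μ - j)).eval z * iteratedDeriv j f z

/-- The polynomial `R(Y) = ∑_{j=0}^{μ} a_{μ-j} · Y(Y-1)⋯(Y-j+1)`, where `a_i` is the
coefficient of `z^{δ-i}` in `P_i`. -/
noncomputable def Rpoly (μ δ : ℕ) (P : ℕ → Polynomial ℂ) : Polynomial ℂ :=
  ∑ j ∈ Finset.range (μ + 1),
    Polynomial.C ((P (μ - j)).coeff (δ - (μ - j))) *
      ∏ l ∈ Finset.range j, (Polynomial.X - Polynomial.C (l : ℂ))

/-- The set of finite singularities of `D`: the roots of `P₀`. -/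
def Sing (P0 : Polynomial ℂ) : Set ℂ := {ρ : ℂ | P0.eval ρ = 0}

/-- The cut plane `Ω_θ`: the plane minus the closed half-lines of direction `π - θ`
starting at the points of `S`. -/
def cutPlane (S : Set ℂ) (θ : ℝ) : Set ℂ :=
  {z : ℂ | ∀ ρ ∈ S, ∀ t : ℝ, 0 ≤ t →
    z ≠ ρ + (t : ℂ) * Complex.exp (Complex.I * ((Real.pi - θ : ℝ) : ℂ))}

/-- The cut disk `D_ρ(ε)` at `ρ`. -/
def cutDisk (ρ : ℂ) (θ : ℝ) (ε : ℝ) : Set ℂ :=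
  {z : ℂ | 0 < ‖z - ρ‖ ∧ ‖z - ρ‖ < ε ∧
    ∀ t : ℝ, 0 ≤ t → z - ρ ≠ (t : ℂ) * Complex.exp (Complex.I * ((Real.pi - θ : ℝ) : ℂ))}

/-- `g`, holomorphic on the cut disk `D_ρ(ε)`, extends holomorphically at `ρ`. -/
def ExtendsHolAt (g : ℂ → ℂ) (ρ : ℂ) (θ : ℝ) (ε : ℝ) : Prop :=
  ∃ ε' : ℝ, 0 < ε' ∧ ε' ≤ ε ∧ ∃ h : ℂ → ℂ,
    DifferentiableOn ℂ h (Metric.ball ρ ε') ∧ ∀ z ∈ cutDisk ρ θ ε', g z = h z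

/-- `θ` is an admissible direction for the singularity set `S`:
`ρ - ρ' ∉ ℝ · e^{-iθ}` for all distinct `ρ, ρ' ∈ S`. -/
def GoodDirection (S : Set ℂ) (θ : ℝ) : Prop :=
  ∀ ρ ∈ S, ∀ ρ' ∈ S, ρ ≠ ρ' → ∀ t : ℝ,
    ρ - ρ' ≠ (t : ℂ) * Complex.exp (-Complex.I * (θ : ℂ))
/-- The operator `D` acting on polynomials, as a linear map `ℂ[z] → ℂ[z]`. -/
noncomputable def DLin (μ : ℕ) (P : ℕ → Polynomial ℂ) :
    Polynomial ℂ →ₗ[ℂ] Polynomial ℂ :=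
  ∑ j ∈ Finset.range (μ + 1),
    LinearMap.comp (LinearMap.mulLeft ℂ (P (μ - j)))
      ((Polynomial.derivative : Module.End ℂ (Polynomial ℂ)) ^ j)

/-!
`D` shifts degrees by `δ - μ = N - M`: it maps `ℂ[z]_{<M+i}` into `ℂ[z]_{<N+i}`, and the
coefficient of `z^{N+i}` in `D(z^{M+i})` is `R(M+i) ≠ 0`. Above degree `M`, `D` is thus
triangular with nonzero diagonal. Killing leading coefficients one at a time writes every
polynomial as `D u` plus a polynomial of degree `< N`; and if `deg q = M + i ≥ M` then `D q` has
degree exactly `N + i ≥ N`, so `D q ∈ ℂ[z]_{<N}` forces `q ∈ ℂ[z]_{<M}`. The isomorphism of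
quotients is then the second isomorphism theorem for `D(ℂ[z]) + ℂ[z]_{<N} = ℂ[z]`.
-/

namespace Submodule

variable {R V : Type*} [Ring R] [AddCommGroup V] [Module R V]

noncomputable def quotientComapSubtypeEquivOfSupEqTop {A B : Submodule R V} (h : A ⊔ B = ⊤) :
    (B ⧸ A.comap B.subtype) ≃ₗ[R] V ⧸ A :=
  (quotEquivOfEq _ _ (by rw [LinearMap.ker_comp, ker_mkQ])).trans
    ((A.mkQ ∘ₗ B.subtype).quotKerEquivOfSurjective fun y => by
      obtain ⟨p, rfl⟩ := A.mkQ_surjective y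
      obtain ⟨a, ha, b, hb, rfl⟩ := mem_sup.mp (h ▸ mem_top : p ∈ A ⊔ B)
      refine ⟨⟨b, hb⟩, (Quotient.eq A).mpr ?_⟩
      simpa using A.neg_mem ha)

@[simp]
theorem quotientComapSubtypeEquivOfSupEqTop_apply_mk {A B : Submodule R V} (h : A ⊔ B = ⊤)
    (q : B) : quotientComapSubtypeEquivOfSupEqTop h (Quotient.mk q) = Quotient.mk (q : V) :=
  rfl

end Submodule

namespace Polynomial

theorem erase_mem_degreeLT {R : Type*} [Semiring R] {n : ℕ} {p : R[X]}
    (hp : p ∈ degreeLT R (n + 1)) : p.erase n ∈ degreeLT R n := by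
  rw [mem_degreeLT, degree_lt_iff_coeff_zero]
  intro m hm
  rw [coeff_erase]
  split_ifs with h
  · rfl
  · exact (degree_lt_iff_coeff_zero _ _).mp (mem_degreeLT.mp hp) m (by omega)

section DegreeShift

variable {K : Type*} [Field K] (D : K[X] →ₗ[K] K[X]) {M N : ℕ}
  (hD : ∀ i, ∀ q ∈ degreeLT K (M + i), D q ∈ degreeLT K (N + i))
include hD

theorem coeff_apply_of_mem_degreeLT_succ (i : ℕ) {q : K[X]} (hq : q ∈ degreeLT K (M + i + 1)) :
    (D q).coeff (N + i) = q.coeff (M + i) * (D (X ^ (M + i))).coeff (N + i) := by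
  conv_lhs => rw [← monomial_add_erase q (M + i)]
  have hlow : (D (q.erase (M + i))).coeff (N + i) = 0 :=
    (degree_lt_iff_coeff_zero _ _).mp (mem_degreeLT.mp (hD i _ (erase_mem_degreeLT hq))) _ le_rfl
  rw [map_add, coeff_add, hlow, add_zero, ← C_mul_X_pow_eq_monomial, ← smul_eq_C_mul, map_smul,
    coeff_smul, smul_eq_mul]

variable (hc : ∀ i, (D (X ^ (M + i))).coeff (N + i) ≠ 0)
include hc

theorem range_sup_degreeLT_eq_top : LinearMap.range D ⊔ degreeLT K N = ⊤ := by
  set S := LinearMap.range D ⊔ degreeLT K N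
  have hS : ∀ i, degreeLT K (N + i) ≤ S := by
    intro i
    induction i with
    | zero => exact le_sup_right
    | succ i ih =>
      set g := D (X ^ (M + i))
      have hg : g ∈ degreeLT K (N + i + 1) := hD (i + 1) _ <| mem_degreeLT.mpr <|
        (degree_X_pow_le _).trans_lt (by exact_mod_cast Nat.lt_succ_self _)
      have hX : X ^ (N + i) ∈ S := by
        have : g.coeff (N + i) • X ^ (N + i) = g - g.erase (N + i) := by
          rw [eq_sub_iff_add_eq, smul_eq_C_mul, C_mul_X_pow_eq_monomial, monomial_add_erase]
        rw [← inv_smul_smul₀ (hc i) (X ^ (N + i)), this]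
        exact S.smul_mem _
          (S.sub_mem (Submodule.mem_sup_left ⟨_, rfl⟩) (ih (erase_mem_degreeLT hg)))
      intro p hp
      rw [← monomial_add_erase p (N + i), ← C_mul_X_pow_eq_monomial, ← smul_eq_C_mul]
      exact S.add_mem (S.smul_mem _ hX) (ih (erase_mem_degreeLT hp))
  refine Submodule.eq_top_iff'.mpr fun p => hS (p.natDegree + 1) ?_
  rw [mem_degreeLT]
  exact degree_le_natDegree.trans_lt
    (by exact_mod_cast (by omega : p.natDegree < N + (p.natDegree + 1)))

theorem range_inf_degreeLT_eq_map_degreeLT :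
    LinearMap.range D ⊓ degreeLT K N = (degreeLT K M).map D := by
  refine le_antisymm ?_ fun _ ⟨q, hq, hDq⟩ => ⟨⟨q, hDq⟩, hDq ▸ hD 0 q hq⟩
  rintro _ ⟨⟨q, rfl⟩, hDq⟩
  refine ⟨q, ?_, rfl⟩
  rw [SetLike.mem_coe] at hDq ⊢
  by_contra hqM
  have hq0 : q ≠ 0 := fun h => hqM (h ▸ zero_mem _)
  obtain ⟨i, hi⟩ : ∃ i, q.natDegree = M + i := by
    rw [mem_degreeLT, not_lt, degree_eq_natDegree hq0] at hqM
    have : M ≤ q.natDegree := by exact_mod_cast hqM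
    exact ⟨q.natDegree - M, by omega⟩
  have htop := coeff_apply_of_mem_degreeLT_succ D hD i (q := q) (by
    rw [mem_degreeLT, degree_eq_natDegree hq0, hi]; exact_mod_cast Nat.lt_succ_self _)
  rw [(degree_lt_iff_coeff_zero _ _).mp (mem_degreeLT.mp hDq) _ (by omega), ← hi] at htop
  exact mul_ne_zero (leadingCoeff_ne_zero.mpr hq0) (hi ▸ hc i) htop.symm

end DegreeShift

end Polynomial

section DLin

variable {μ δ : ℕ} {P : ℕ → Polynomial ℂ}

theorem DLin_apply (q : ℂ[X]) :
    DLin μ P q = ∑ j ∈ range (μ + 1), P (μ - j) * derivative^[j] q := by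
  simp [DLin, LinearMap.sum_apply, Module.End.pow_apply]

theorem DLin_mem_degreeLT (hdeg : ∀ i, i ≤ μ → ∀ k, δ < k + i → (P i).coeff k = 0)
    {q : ℂ[X]} {k n : ℕ} (hq : q ∈ degreeLT ℂ k) (hn : δ + k ≤ n + μ) :
    DLin μ P q ∈ degreeLT ℂ n := by
  rw [DLin_apply]
  refine Submodule.sum_mem _ fun j hj => ?_
  have hjμ : j ≤ μ := Nat.lt_succ_iff.mp (mem_range.mp hj)
  rw [mem_degreeLT, degree_lt_iff_coeff_zero]
  intro m hm
  rw [coeff_mul]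
  refine sum_eq_zero fun x hx => ?_
  have hx : x.1 + x.2 = m := mem_antidiagonal.mp hx
  rcases lt_or_ge δ (x.1 + (μ - j)) with hP | hP
  · rw [hdeg (μ - j) (Nat.sub_le _ _) x.1 hP, zero_mul]
  · rw [coeff_iterate_derivative,
      (degree_lt_iff_coeff_zero _ _).mp (mem_degreeLT.mp hq) _ (by omega), smul_zero, mul_zero]

theorem coeff_DLin_X_pow (hdeg : ∀ i, i ≤ μ → ∀ k, δ < k + i → (P i).coeff k = 0)
    {k n : ℕ} (hn : n + μ = δ + k) :
    (DLin μ P (X ^ k)).coeff n = (Rpoly μ δ P).eval (k : ℂ) := by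
  simp only [DLin_apply, finsetSum_coeff, Rpoly, eval_finsetSum, eval_mul, eval_C, eval_prod,
    eval_sub, eval_X, ← descPochhammer_eval_eq_prod_range,
    descPochhammer_eval_eq_descFactorial]
  refine sum_congr rfl fun j hj => ?_
  have hjμ : j ≤ μ := Nat.lt_succ_iff.mp (mem_range.mp hj)
  rw [iterate_derivative_X_pow_eq_C_mul, ← mul_assoc, coeff_mul_X_pow', coeff_mul_C]
  rcases lt_or_ge k j with hkj | hjk
  · simp [Nat.descFactorial_eq_zero_iff_lt.mpr hkj]
  by_cases hjδ : μ - j ≤ δ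
  · rw [if_pos (by omega), show n - (k - j) = δ - (μ - j) by omega]
  · rw [if_neg (by omega), hdeg (μ - j) (Nat.sub_le _ _) _ (by omega), zero_mul]

end DLin

theorem quotient_by_range_D_general
    (μ δ M N : ℕ) (P : ℕ → Polynomial ℂ)
    (hdeg : ∀ i, i ≤ μ → ∀ k, δ < k + i → (P i).coeff k = 0)
    (hM2 : ∀ k : ℕ, M ≤ k → (Rpoly μ δ P).eval (k : ℂ) ≠ 0)
    (hN : N + μ = M + δ) :
    (⊤ : Submodule ℂ (Polynomial ℂ))
        = LinearMap.range (DLin μ P) ⊔ Polynomial.degreeLT ℂ N ∧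
    LinearMap.range (DLin μ P) ⊓ Polynomial.degreeLT ℂ N
        = Submodule.map (DLin μ P) (Polynomial.degreeLT ℂ M) ∧
    ∃ e : ((Polynomial.degreeLT ℂ N : Submodule ℂ (Polynomial ℂ)) ⧸
            (Submodule.map (DLin μ P) (Polynomial.degreeLT ℂ M)).comap
              (Polynomial.degreeLT ℂ N).subtype) ≃ₗ[ℂ]
          (Polynomial ℂ ⧸ LinearMap.range (DLin μ P)),
      ∀ q : (Polynomial.degreeLT ℂ N : Submodule ℂ (Polynomial ℂ)),
        e (Submodule.Quotient.mk q) = Submodule.Quotient.mk (q : Polynomial ℂ) := by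
  have hD : ∀ i, ∀ q ∈ degreeLT ℂ (M + i), DLin μ P q ∈ degreeLT ℂ (N + i) :=
    fun i q hq => DLin_mem_degreeLT hdeg hq (by omega)
  have hc : ∀ i, (DLin μ P (X ^ (M + i))).coeff (N + i) ≠ 0 := fun i => by
    rw [coeff_DLin_X_pow hdeg (by omega)]
    exact hM2 _ (Nat.le_add_right _ _)
  have hsup := range_sup_degreeLT_eq_top _ hD hc
  have hinf := range_inf_degreeLT_eq_map_degreeLT _ hD hc
  refine ⟨hsup.symm, hinf, ?_⟩
  rw [← hinf, Submodule.comap_inf, Submodule.comap_subtype_self, inf_top_eq]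
  exact ⟨_, Submodule.quotientComapSubtypeEquivOfSupEqTop_apply_mk hsup⟩

/-- `ℂ[z] = D(ℂ[z]) + ℂ[z]_{<N}`, `D(ℂ[z]) ∩ ℂ[z]_{<N} = D(ℂ[z]_{<M})`, and the inclusion
`ℂ[z]_{<N} ⊆ ℂ[z]` induces a bijective linear map
`ℂ[z]_{<N} / D(ℂ[z]_{<M}) → ℂ[z] / D(ℂ[z])`. -/
theorem quotient_by_range_D
    (μ δ M N : ℕ) (P : ℕ → Polynomial ℂ)
    (hμ : 1 ≤ μ)
    (hlead : (P 0).coeff δ ≠ 0)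
    (hdeg : ∀ i, i ≤ μ → ∀ k, δ < k + i → (P i).coeff k = 0)
    (hM1 : μ ≤ δ + M)
    (hM2 : ∀ k : ℕ, M ≤ k → (Rpoly μ δ P).eval (k : ℂ) ≠ 0)
    (hMmin : ∀ M' : ℕ, M' < M →
      ¬ (μ ≤ δ + M' ∧ ∀ k : ℕ, M' ≤ k → (Rpoly μ δ P).eval (k : ℂ) ≠ 0))
    (hN : N + μ = M + δ) :
    (⊤ : Submodule ℂ (Polynomial ℂ))
        = LinearMap.range (DLin μ P) ⊔ Polynomial.degreeLT ℂ N ∧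
    LinearMap.range (DLin μ P) ⊓ Polynomial.degreeLT ℂ N
        = Submodule.map (DLin μ P) (Polynomial.degreeLT ℂ M) ∧
    ∃ e : ((Polynomial.degreeLT ℂ N : Submodule ℂ (Polynomial ℂ)) ⧸
            (Submodule.map (DLin μ P) (Polynomial.degreeLT ℂ M)).comap
              (Polynomial.degreeLT ℂ N).subtype) ≃ₗ[ℂ]
          (Polynomial ℂ ⧸ LinearMap.range (DLin μ P)),
      ∀ q : (Polynomial.degreeLT ℂ N : Submodule ℂ (Polynomial ℂ)),
        e (Submodule.Quotient.mk q) = Submodule.Quotient.mk (q : Polynomial ℂ) :=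
  quotient_by_range_D_general μ δ M N P hdeg hM2 hN
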